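/- The difference of covariance matrices of the almost unbiased Liu-type estimator and the modified almost unbiased Liu-type estimator admits the spectral decomposition Cov_AULTE − Cov_MAULTE = Q · diag( (λ_j − d)²(λ_j + 2k + d)²(k + d)(2λ_j + k − d) / (λ_j (λ_j + k)⁶) ; j = 1,…,p ) · Qᵀ. -/

import Mathlib

open Matrix

/-- Covariance matrix of the Liu-type estimator (LTE). -/
noncomputable def covLTE {p : ℕ} (V : Matrix (Fin p) (Fin p) ℝ) (k d : ℝ) :
    Matrix (Fin p) (Fin p) ℝ :=
  (V + k • 1)⁻¹ * (V - d • 1) * V⁻¹ * (V - d • 1) * (V + k • 1)⁻¹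

/-- Covariance matrix of the almost unbiased Liu-type estimator (AULTE). -/
noncomputable def covAULTE {p : ℕ} (V : Matrix (Fin p) (Fin p) ℝ) (k d : ℝ) :
    Matrix (Fin p) (Fin p) ℝ :=
  (1 - (k + d) ^ 2 • ((V + k • 1)⁻¹) ^ 2) * V⁻¹ * (1 - (k + d) ^ 2 • ((V + k • 1)⁻¹) ^ 2)

/-- The matrix `M` entering the modified almost unbiased Liu-type estimator (MAULTE). -/
noncomputable def mMAULTE {p : ℕ} (V : Matrix (Fin p) (Fin p) ℝ) (k d : ℝ) :
    Matrix (Fin p) (Fin p) ℝ :=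
  (1 - (k + d) ^ 2 • ((V + k • 1)⁻¹) ^ 2) * (1 - (k + d) • (V + k • 1)⁻¹)

/-- Covariance matrix of the MAULTE. -/
noncomputable def covMAULTE {p : ℕ} (V : Matrix (Fin p) (Fin p) ℝ) (k d : ℝ) :
    Matrix (Fin p) (Fin p) ℝ :=
  mMAULTE V k d * V⁻¹ * (mMAULTE V k d)ᵀ

/-- Bias vector of the LTE. -/
noncomputable def biasLTE {p : ℕ} (V : Matrix (Fin p) (Fin p) ℝ) (k d : ℝ) (β : Fin p → ℝ) :
    Fin p → ℝ :=
  (-(d + k)) • ((V + k • 1)⁻¹ *ᵥ β)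

/-- Bias vector of the AULTE. -/
noncomputable def biasAULTE {p : ℕ} (V : Matrix (Fin p) (Fin p) ℝ) (k d : ℝ) (β : Fin p → ℝ) :
    Fin p → ℝ :=
  (-(d + k) ^ 2) • (((V + k • 1)⁻¹) ^ 2 *ᵥ β)

/-- Bias vector of the MAULTE. -/
noncomputable def biasMAULTE {p : ℕ} (V : Matrix (Fin p) (Fin p) ℝ) (k d : ℝ) (β : Fin p → ℝ) :
    Fin p → ℝ :=
  (-(d + k)) •
    (((1 + (d + k) • (V + k • 1)⁻¹ - (d + k) ^ 2 • ((V + k • 1)⁻¹) ^ 2) * (V + k • 1)⁻¹) *ᵥ β)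

/-- Matrix mean squared error built from a covariance matrix and a bias vector. -/
noncomputable def mmse {p : ℕ} (C : Matrix (Fin p) (Fin p) ℝ) (b : Fin p → ℝ) :
    Matrix (Fin p) (Fin p) ℝ :=
  C + vecMulVec b b

/-!
Conjugation by the orthogonal matrix `Q` is a star-algebra automorphism of the real matrices that
also commutes with matrix inversion, so both covariance matrices are conjugates of the same
expressions evaluated at `diag λ`, where everything is diagonal. Writing `t = (k + d) / (λ + k)`,
the eigenvalue of the difference is `(1 - t²)² (1 - (1 - t)²) / λ`, and
`1 - t² = (λ - d)(λ + 2k + d) / (λ + k)²`, `1 - (1 - t)² = (k + d)(2λ + k - d) / (λ + k)²`.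
-/

namespace Matrix

variable {n α : Type*} [Fintype n] [DecidableEq n]

theorem inv_diagonal_of_ne_zero [Field α] {v : n → α} (hv : ∀ i, v i ≠ 0) :
    (diagonal v)⁻¹ = diagonal fun i ↦ (v i)⁻¹ :=
  inv_eq_left_inv <| by simp [diagonal_mul_diagonal, hv, diagonal_one]

theorem inv_diagonal_add_smul_one [Field α] {v : n → α} {k : α} (hv : ∀ i, v i + k ≠ 0) :
    (diagonal v + k • 1)⁻¹ = diagonal fun i ↦ (v i + k)⁻¹ := by
  rw [smul_one_eq_diagonal, diagonal_add, inv_diagonal_of_ne_zero hv]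

-- `Matrix.mul_inv_rev` is unconditional, since a singular matrix has inverse `0`.
theorem conjStarAlgAut_inv [CommRing α] [StarRing α] (u : unitaryGroup n α) (A : Matrix n n α) :
    Unitary.conjStarAlgAut α _ u A⁻¹ = (Unitary.conjStarAlgAut α _ u A)⁻¹ := by
  have hu : (u : Matrix n n α)⁻¹ = star (u : Matrix n n α) :=
    inv_eq_left_inv (Unitary.coe_star_mul_self u)
  have hu' : (star (u : Matrix n n α))⁻¹ = u := inv_eq_left_inv (Unitary.coe_mul_star_self u)
  simp only [Unitary.conjStarAlgAut_apply, mul_inv_rev, hu, hu', Matrix.mul_assoc]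

theorem conjStarAlgAut_transpose [CommRing α] [StarRing α] [TrivialStar α] (u : unitaryGroup n α)
    (A : Matrix n n α) :
    Unitary.conjStarAlgAut α _ u Aᵀ = (Unitary.conjStarAlgAut α _ u A)ᵀ := by
  simpa only [star_eq_conjTranspose, conjTranspose_eq_transpose_of_trivial] using
    map_star (Unitary.conjStarAlgAut α _ u) A

end Matrix

section Conjugation

variable {p : ℕ} (u : unitaryGroup (Fin p) ℝ) (V : Matrix (Fin p) (Fin p) ℝ) (k d : ℝ)

theorem covAULTE_conjStarAlgAut :
    covAULTE (Unitary.conjStarAlgAut ℝ _ u V) k d =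
      Unitary.conjStarAlgAut ℝ _ u (covAULTE V k d) := by
  simp only [covAULTE, map_mul, map_sub, map_pow, map_smul, map_add, map_one, conjStarAlgAut_inv]

theorem covMAULTE_conjStarAlgAut :
    covMAULTE (Unitary.conjStarAlgAut ℝ _ u V) k d =
      Unitary.conjStarAlgAut ℝ _ u (covMAULTE V k d) := by
  simp only [covMAULTE, mMAULTE, map_mul, map_sub, map_pow, map_smul, map_add, map_one,
    conjStarAlgAut_inv, conjStarAlgAut_transpose]

end Conjugation

section Diagonal

variable {p : ℕ} {lam : Fin p → ℝ} {k : ℝ} (d : ℝ)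

theorem covAULTE_diagonal (hlam : ∀ j, lam j ≠ 0) (hk : ∀ j, lam j + k ≠ 0) :
    covAULTE (diagonal lam) k d =
      diagonal fun j ↦ (1 - ((k + d) / (lam j + k)) ^ 2) ^ 2 / lam j := by
  rw [covAULTE, inv_diagonal_add_smul_one hk, inv_diagonal_of_ne_zero hlam]
  simp only [diagonal_pow, ← diagonal_smul, ← diagonal_one', diagonal_sub, diagonal_mul_diagonal]
  congr 1
  funext j
  simp only [Pi.pow_apply, Pi.smul_apply, Pi.one_apply, smul_eq_mul]
  ring

theorem covMAULTE_diagonal (hlam : ∀ j, lam j ≠ 0) (hk : ∀ j, lam j + k ≠ 0) :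
    covMAULTE (diagonal lam) k d =
      diagonal fun j ↦
        ((1 - ((k + d) / (lam j + k)) ^ 2) * (1 - (k + d) / (lam j + k))) ^ 2 / lam j := by
  rw [covMAULTE, mMAULTE, inv_diagonal_add_smul_one hk, inv_diagonal_of_ne_zero hlam]
  simp only [diagonal_pow, ← diagonal_smul, ← diagonal_one', diagonal_sub, diagonal_mul_diagonal,
    diagonal_transpose]
  congr 1
  funext j
  simp only [Pi.pow_apply, Pi.smul_apply, Pi.one_apply, smul_eq_mul]
  ring

end Diagonal

theorem eigenvalue_covAULTE_sub_covMAULTE {l k d : ℝ} (hl : l ≠ 0) (hlk : l + k ≠ 0) :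
    (1 - ((k + d) / (l + k)) ^ 2) ^ 2 / l -
        ((1 - ((k + d) / (l + k)) ^ 2) * (1 - (k + d) / (l + k))) ^ 2 / l =
      (l - d) ^ 2 * (l + 2 * k + d) ^ 2 * (k + d) * (2 * l + k - d) / (l * (l + k) ^ 6) := by
  field_simp
  ring

/-- Spectral decomposition of `Cov_AULTE − Cov_MAULTE`. -/
theorem covAULTE_sub_covMAULTE_eq (p : ℕ) (Q : Matrix (Fin p) (Fin p) ℝ) (hQ : Q * Qᵀ = 1)
    (lam : Fin p → ℝ) (hlam : ∀ j, 0 < lam j) (k d : ℝ) (hk : 0 < k) :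
    covAULTE (Q * Matrix.diagonal lam * Qᵀ) k d - covMAULTE (Q * Matrix.diagonal lam * Qᵀ) k d =
      Q * Matrix.diagonal (fun j =>
        (lam j - d) ^ 2 * (lam j + 2 * k + d) ^ 2 * (k + d) * (2 * lam j + k - d) /
          (lam j * (lam j + k) ^ 6)) * Qᵀ := by
  have hQT : star Q = Qᵀ := by rw [star_eq_conjTranspose, conjTranspose_eq_transpose_of_trivial]
  let u : unitaryGroup (Fin p) ℝ := ⟨Q, mem_unitaryGroup_iff.mpr (hQT ▸ hQ)⟩
  have hconj (A : Matrix (Fin p) (Fin p) ℝ) : Q * A * Qᵀ = Unitary.conjStarAlgAut ℝ _ u A := by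
    rw [Unitary.conjStarAlgAut_apply, ← hQT]
  have hl (j : Fin p) : lam j ≠ 0 := (hlam j).ne'
  have hlk (j : Fin p) : lam j + k ≠ 0 := (add_pos (hlam j) hk).ne'
  rw [hconj, hconj, covAULTE_conjStarAlgAut, covMAULTE_conjStarAlgAut, ← map_sub,
    covAULTE_diagonal d hl hlk, covMAULTE_diagonal d hl hlk, diagonal_sub]
  simp only [eigenvalue_covAULTE_sub_covMAULTE (hl _) (hlk _)]
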